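/- Consider the system of real equations in unknowns S, λ₁, h111, h112: λ₁² = S/2, S ≠ 0, 4h111² + 4h112² = S(1-S), h111(3h111² - 3h112² - λ₁²) = 0, h112(3h111² - 3h112² + λ₁²) = 0, (h111, h112) ≠ (0,0), together with the equality 4(2-S)h111² - 12λ₁²h111² = h1111² + h2222² + 3h1122² + 3h2211², where h1111 = -2h112²/λ₁ - λ₁/2, h2211 = 2h111²/λ₁ - λ₁/2, h1122 = -2h112²/λ₁ + λ₁/2, h2222 = 2h111²/λ₁ + λ₁/2, h1112 = -2h111h112/λ₁, h2212 = 2h111h112/λ₁. In the case h112 = 0, this system has no solution. -/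

import Mathlib

theorem polynomial_system_no_solution
    (S lam1 h111 h112 h1111 h2211 h1122 h2222 h1112 h2212 : ℝ)
    (hl : lam1 ^ 2 = S / 2) (hS : S ≠ 0)
    (e1 : 4 * h111 ^ 2 + 4 * h112 ^ 2 = S * (1 - S))
    (e2 : h111 * (3 * h111 ^ 2 - 3 * h112 ^ 2 - lam1 ^ 2) = 0)
    (e3 : h112 * (3 * h111 ^ 2 - 3 * h112 ^ 2 + lam1 ^ 2) = 0)
    (hnz : (h111, h112) ≠ (0, 0))
    (d1 : h1111 = -2 * h112 ^ 2 / lam1 - lam1 / 2)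
    (d2 : h2211 = 2 * h111 ^ 2 / lam1 - lam1 / 2)
    (d3 : h1122 = -2 * h112 ^ 2 / lam1 + lam1 / 2)
    (d4 : h2222 = 2 * h111 ^ 2 / lam1 + lam1 / 2)
    (d5 : h1112 = -2 * h111 * h112 / lam1)
    (d6 : h2212 = 2 * h111 * h112 / lam1)
    (hcase : h112 = 0)
    (heq : 4 * (2 - S) * h111 ^ 2 - 12 * lam1 ^ 2 * h111 ^ 2 =
      h1111 ^ 2 + h2222 ^ 2 + 3 * h1122 ^ 2 + 3 * h2211 ^ 2) :
    False := by
  subst hcase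
  have h111ne : h111 ≠ 0 := by
    intro h; exact hnz (by simp [h])
  have lamne : lam1 ≠ 0 := by
    intro h
    have h2 : 3 * h111 ^ 2 - 3 * 0 ^ 2 - lam1 ^ 2 = 0 := by
      rcases mul_eq_zero.mp e2 with h' | h'
      · exact absurd h' h111ne
      · exact h'
    have : h111 ^ 2 = 0 := by nlinarith [sq_nonneg h111]
    exact h111ne (pow_eq_zero_iff (by norm_num) |>.mp this)
  have key : 3 * h111 ^ 2 = lam1 ^ 2 := by
    rcases mul_eq_zero.mp e2 with h' | h'
    · exact absurd h' h111ne
    · nlinarith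
  subst d1 d2 d3 d4
  have hS3 : S = 1 / 3 := by
    have h0 : S * (S - 1 / 3) = 0 := by nlinarith
    rcases mul_eq_zero.mp h0 with h | h
    · exact absurd h hS
    · linarith
  rw [hS3] at hl e1
  have hh : h111 ^ 2 = 1 / 18 := by nlinarith
  have h6 : lam1 ^ 2 = 1 / 6 := by linarith
  field_simp at heq
  ring_nf at heq
  have c1 : h111 ^ 2 * lam1 ^ 4 = 1/648 := by
    linear_combination lam1 ^ 4 * hh + (1/18) * (lam1 ^ 2 + 1/6) * h6
  have c2 : h111 ^ 2 * lam1 ^ 6 = 1/3888 := by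
    linear_combination lam1 ^ 6 * hh + (1/18) * (lam1 ^ 4 + lam1 ^ 2 / 6 + 1/36) * h6
  have c3 : h111 ^ 4 * lam1 ^ 2 = 1/1944 := by
    linear_combination (h111 ^ 2 + 1/18) * lam1 ^ 2 * hh + (1/324) * h6
  have c4 : lam1 ^ 6 = 1/216 := by
    linear_combination (lam1 ^ 4 + lam1 ^ 2 / 6 + 1/36) * h6
  have c5 : S * h111 ^ 2 * lam1 ^ 4 = 1/1944 := by
    linear_combination h111 ^ 2 * lam1 ^ 4 * hS3 + (1/3) * c1
  linarith [heq, show h111 ^ 2 * lam1 ^ 2 = 1/108 by rw [hh, h6]; norm_num, show h111 ^ 2 * lam1 ^ 2 * S = 1/324 by rw [hh, h6, hS3]; norm_num, show h111 ^ 4 = 1/324 by rw [show h111 ^ 4 = (h111 ^ 2) ^ 2 by ring, hh]; norm_num, show lam1 ^ 4 = 1/36 by rw [show lam1 ^ 4 = (lam1 ^ 2) ^ 2 by ring, h6]; norm_num]
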